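/- Let r, t, t′, s be reals with t ≥ r/2, t′ ≥ r/2 and s > max{t,t′} − r/2. Then there exists a constant C > 0, depending only on (r, t, t′, s), such that for every function b : ℕ×ℕ → ℝ satisfying 0 ≤ b(j,j′) ≤ 2^{(j+j′)r/2 − |j−j′| s} for all j, j′ ∈ ℕ, and for every J ∈ ℕ, the following hold: (a) for every j′ ≤ J, Σ_{j > J} 2^{−j t′ − j′ t} b(j,j′) ≤ C · 2^{−J(t+t′−r)}; (b) for every j′ > J, Σ_{j ≥ 0} 2^{−j t′ − j′ t} b(j,j′) ≤ C · 2^{−J(t+t′−r)}; (c) for every j ≤ J, Σ_{j′ > J} 2^{−j t′ − j′ t} b(j,j′) ≤ C · 2^{−J(t+t′−r)}; (d) for every j > J, Σ_{j′ ≥ 0} 2^{−j t′ − j′ t} b(j,j′) ≤ C · 2^{−J(t+t′−r)}. -/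

import Mathlib

open scoped BigOperators

/-- The weighted block term `2^{−jt' − j't} · b(j,j')`. -/
noncomputable def wTerm (t t' : ℝ) (b : ℕ × ℕ → ℝ) (j j' : ℕ) : ℝ :=
  (2 : ℝ) ^ (-(j : ℝ) * t' - (j' : ℝ) * t) * b (j, j')


noncomputable def G (c : ℝ) : ℝ := (1 - (2:ℝ) ^ (-c))⁻¹

lemma rpow_neg_lt_one {c : ℝ} (hc : 0 < c) : (2:ℝ) ^ (-c) < 1 :=
  Real.rpow_lt_one_of_one_lt_of_neg one_lt_two (by linarith)

lemma G_pos {c : ℝ} (hc : 0 < c) : 0 < G c := by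
  have h1 := rpow_neg_lt_one hc
  unfold G
  exact inv_pos.mpr (by linarith)

lemma geo_eq (c : ℝ) (i : ℕ) : (2:ℝ) ^ (-(i:ℝ) * c) = ((2:ℝ)^(-c))^i := by
  rw [← Real.rpow_natCast ((2:ℝ)^(-c)) i, ← Real.rpow_mul (by norm_num : (0:ℝ) ≤ 2)]
  ring_nf

lemma geo_summable {c : ℝ} (hc : 0 < c) : Summable (fun i : ℕ => (2:ℝ) ^ (-(i:ℝ) * c)) := by
  simp_rw [geo_eq]
  exact summable_geometric_of_lt_one (Real.rpow_pos_of_pos two_pos _).le (rpow_neg_lt_one hc)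

lemma geo_tsum {c : ℝ} (hc : 0 < c) : ∑' i : ℕ, (2:ℝ) ^ (-(i:ℝ) * c) = G c := by
  simp_rw [geo_eq]
  exact tsum_geometric_of_lt_one (Real.rpow_pos_of_pos two_pos _).le (rpow_neg_lt_one hc)

lemma bound_by_geo {f : ℕ → ℝ} {K c : ℝ} (hc : 0 < c) (hK : 0 ≤ K)
    (h0 : ∀ i, 0 ≤ f i) (hle : ∀ i, f i ≤ K * (2:ℝ) ^ (-(i:ℝ) * c)) :
    Summable f ∧ ∑' i, f i ≤ K * G c := by
  have hg : Summable (fun i : ℕ => K * (2:ℝ) ^ (-(i:ℝ) * c)) := (geo_summable hc).mul_left K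
  have hf : Summable f := Summable.of_nonneg_of_le h0 hle hg
  refine ⟨hf, ?_⟩
  calc ∑' i, f i ≤ ∑' i : ℕ, K * (2:ℝ)^(-(i:ℝ)*c) := Summable.tsum_le_tsum hle hf hg
    _ = K * G c := by rw [tsum_mul_left, geo_tsum hc]


lemma two_rpow_le {x y : ℝ} (h : x ≤ y) : (2:ℝ)^x ≤ (2:ℝ)^y :=
  Real.rpow_le_rpow_of_exponent_le one_le_two h

lemma wTerm_nonneg {t t' : ℝ} {b : ℕ × ℕ → ℝ} {j j' : ℕ} (h : 0 ≤ b (j,j')) :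
    0 ≤ wTerm t t' b j j' :=
  mul_nonneg (Real.rpow_nonneg (by norm_num) _) h

lemma wTerm_le {t t' r s : ℝ} {b : ℕ × ℕ → ℝ} {j j' : ℕ}
    (hb : b (j, j') ≤ (2 : ℝ) ^ (((j : ℝ) + (j' : ℝ)) * r / 2 - |(j : ℝ) - (j' : ℝ)| * s)) :
    wTerm t t' b j j'
      ≤ (2:ℝ) ^ (-(j:ℝ) * t' - (j':ℝ) * t + (((j:ℝ) + (j':ℝ)) * r / 2 - |(j:ℝ) - (j':ℝ)| * s)) := by
  rw [Real.rpow_add two_pos]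
  exact mul_le_mul_of_nonneg_left hb (Real.rpow_nonneg (by norm_num) _)

lemma wTerm_swap (t t' : ℝ) (b : ℕ × ℕ → ℝ) (j j' : ℕ) :
    wTerm t' t (fun p => b (p.2, p.1)) j' j = wTerm t t' b j j' := by
  unfold wTerm
  have : -(j':ℝ)*t - (j:ℝ)*t' = -(j:ℝ)*t' - (j':ℝ)*t := by ring
  rw [this]

def natEquivGt (J : ℕ) : ℕ ≃ {j : ℕ // J < j} where
  toFun i := ⟨J + 1 + i, by omega⟩
  invFun j := j.1 - (J + 1)
  left_inv i := by show J + 1 + i - (J + 1) = i; omega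
  right_inv j := by
    apply Subtype.ext
    show J + 1 + (j.1 - (J + 1)) = j.1
    have := j.2
    omega

lemma row_bounds (r t t' s : ℝ) (ht : r / 2 ≤ t) (ht' : r / 2 ≤ t') (hs : s > max t t' - r / 2)
    (b : ℕ × ℕ → ℝ)
    (hb : ∀ j j' : ℕ, 0 ≤ b (j, j') ∧
      b (j, j') ≤ (2 : ℝ) ^ (((j : ℝ) + (j' : ℝ)) * r / 2 - |(j : ℝ) - (j' : ℝ)| * s))
    (J : ℕ) :
    (∀ j' : ℕ, j' ≤ J →
        Summable (fun j : {j : ℕ // J < j} => wTerm t t' b (j : ℕ) j') ∧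
        ∑' j : {j : ℕ // J < j}, wTerm t t' b (j : ℕ) j'
          ≤ (G ((t' - r/2) + s) + G (s - (t' - r/2))) * (2 : ℝ) ^ (-(J : ℝ) * (t + t' - r))) ∧
    (∀ j' : ℕ, J < j' →
        Summable (fun j : ℕ => wTerm t t' b j j') ∧
        ∑' j : ℕ, wTerm t t' b j j'
          ≤ (G ((t' - r/2) + s) + G (s - (t' - r/2))) * (2 : ℝ) ^ (-(J : ℝ) * (t + t' - r))) := by
  have hα : 0 ≤ t' - r/2 := by linarith
  have hβ : 0 ≤ t - r/2 := by linarith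
  have hsα : t' - r/2 < s := lt_of_le_of_lt (by simpa using sub_le_sub_right (le_max_right t t') (r/2)) hs
  have hsβ : t - r/2 < s := lt_of_le_of_lt (by simpa using sub_le_sub_right (le_max_left t t') (r/2)) hs
  have hspos : 0 < s := lt_of_le_of_lt hβ hsβ
  have hc1 : 0 < (t' - r/2) + s := by linarith
  have hc2 : 0 < s - (t' - r/2) := by linarith
  have hGnn : 0 ≤ G (s - (t' - r/2)) := (G_pos hc2).le
  have hGnn1 : 0 ≤ G ((t' - r/2) + s) := (G_pos hc1).le
  have hKnn : ∀ x : ℝ, (0:ℝ) ≤ (2:ℝ)^x := fun x => Real.rpow_nonneg (by norm_num) _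
  constructor
  · -- part (a)
    intro j' hj'
    have hj'R : (j':ℝ) ≤ J := Nat.cast_le.mpr hj'
    have key := bound_by_geo (f := fun i : ℕ => wTerm t t' b (J + 1 + i) j')
      (K := (2:ℝ) ^ (-(J:ℝ) * (t + t' - r))) (c := (t' - r/2) + s) hc1 (hKnn _)
      (fun i => wTerm_nonneg (hb _ _).1) ?hle
    case hle =>
      intro i
      refine (wTerm_le (hb _ _).2).trans ?_
      rw [← Real.rpow_add two_pos]
      apply two_rpow_le
      push_cast
      rw [abs_of_nonneg (by linarith : (0:ℝ) ≤ (J:ℝ) + 1 + (i:ℝ) - (j':ℝ))]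
      nlinarith [mul_nonneg (sub_nonneg.mpr hj'R) (by linarith : (0:ℝ) ≤ s - (t - r/2))]
    obtain ⟨hsum, hbd⟩ := key
    have e := natEquivGt J
    constructor
    · exact (natEquivGt J).summable_iff.mp hsum
    · rw [← Equiv.tsum_eq (natEquivGt J) (fun j : {j : ℕ // J < j} => wTerm t t' b (j : ℕ) j')]
      refine le_trans hbd ?_
      have : (2:ℝ) ^ (-(J:ℝ) * (t + t' - r)) * G ((t' - r/2) + s)
          ≤ (G ((t' - r/2) + s) + G (s - (t' - r/2))) * (2:ℝ) ^ (-(J:ℝ) * (t + t' - r)) := by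
        rw [mul_comm]
        exact mul_le_mul_of_nonneg_right (by linarith) (hKnn _)
      exact this
  · -- part (b)
    intro j' hj'
    have hj'R : (J:ℝ) ≤ j' := by exact_mod_cast Nat.cast_le.mpr hj'.le
    -- summability over all of ℕ
    have hsum : Summable (fun j : ℕ => wTerm t t' b j j') := by
      refine (bound_by_geo (f := fun j : ℕ => wTerm t t' b j j')
        (K := (2:ℝ) ^ ((j':ℝ) * (s - (t - r/2)))) (c := (t' - r/2) + s) hc1 (hKnn _)
        (fun j => wTerm_nonneg (hb _ _).1) ?_).1
      intro j
      refine (wTerm_le (hb _ _).2).trans ?_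
      rw [← Real.rpow_add two_pos]
      apply two_rpow_le
      nlinarith [le_abs_self ((j:ℝ) - (j':ℝ)), mul_nonneg hspos.le (by linarith [le_abs_self ((j:ℝ) - (j':ℝ))] : (0:ℝ) ≤ |(j:ℝ) - (j':ℝ)| - ((j:ℝ) - (j':ℝ)))]
    refine ⟨hsum, ?_⟩
    -- tail part
    have tail := bound_by_geo (f := fun i : ℕ => wTerm t t' b (i + (j' + 1)) j')
      (K := (2:ℝ) ^ (-(j':ℝ) * (t + t' - r))) (c := (t' - r/2) + s) hc1 (hKnn _)
      (fun i => wTerm_nonneg (hb _ _).1) ?hle2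
    case hle2 =>
      intro i
      refine (wTerm_le (hb _ _).2).trans ?_
      rw [← Real.rpow_add two_pos]
      apply two_rpow_le
      push_cast
      rw [abs_of_nonneg (by linarith : (0:ℝ) ≤ (i:ℝ) + ((j':ℝ) + 1) - (j':ℝ))]
      nlinarith
    -- finite part
    have hfin : ∑ i ∈ Finset.range (j' + 1), wTerm t t' b i j'
        ≤ (2:ℝ) ^ (-(j':ℝ) * (t + t' - r)) * G (s - (t' - r/2)) := by
      have h1 : ∀ i ∈ Finset.range (j' + 1), wTerm t t' b i j'
          ≤ (2:ℝ) ^ (-(j':ℝ) * (t + t' - r)) * (2:ℝ) ^ (-(((j' - i : ℕ)):ℝ) * (s - (t' - r/2))) := by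
        intro i hi
        have hij : i ≤ j' := by simpa [Nat.lt_succ_iff] using hi
        have hijR : (i:ℝ) ≤ (j':ℝ) := Nat.cast_le.mpr hij
        refine (wTerm_le (hb _ _).2).trans ?_
        rw [← Real.rpow_add two_pos]
        apply two_rpow_le
        rw [Nat.cast_sub hij, abs_of_nonpos (by linarith : (i:ℝ) - (j':ℝ) ≤ 0)]
        ring_nf
        nlinarith
      calc ∑ i ∈ Finset.range (j' + 1), wTerm t t' b i j'
          ≤ ∑ i ∈ Finset.range (j' + 1),
              (2:ℝ) ^ (-(j':ℝ) * (t + t' - r)) * (2:ℝ) ^ (-(((j' - i : ℕ)):ℝ) * (s - (t' - r/2))) :=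
            Finset.sum_le_sum h1
        _ = ∑ i ∈ Finset.range (j' + 1),
              (2:ℝ) ^ (-(j':ℝ) * (t + t' - r)) * (2:ℝ) ^ (-((i:ℕ):ℝ) * (s - (t' - r/2))) := by
            rw [← Finset.sum_range_reflect (fun k : ℕ =>
              (2:ℝ) ^ (-(j':ℝ) * (t + t' - r)) * (2:ℝ) ^ (-((k:ℕ):ℝ) * (s - (t' - r/2)))) (j' + 1)]
            apply Finset.sum_congr rfl
            intro i hi
            simp only [Nat.add_sub_cancel]
        _ ≤ ∑' i : ℕ, (2:ℝ) ^ (-(j':ℝ) * (t + t' - r)) * (2:ℝ) ^ (-(i:ℝ) * (s - (t' - r/2))) := by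
            refine Summable.sum_le_tsum _ (fun i _ => mul_nonneg (hKnn _) (hKnn _)) ?_
            exact (geo_summable hc2).mul_left _
        _ = (2:ℝ) ^ (-(j':ℝ) * (t + t' - r)) * G (s - (t' - r/2)) := by
            rw [tsum_mul_left, geo_tsum hc2]
    have hsplit := Summable.sum_add_tsum_nat_add (j' + 1) hsum
    have h2J : (2:ℝ) ^ (-(j':ℝ) * (t + t' - r)) ≤ (2:ℝ) ^ (-(J:ℝ) * (t + t' - r)) := by
      apply two_rpow_le
      nlinarith [mul_nonneg (sub_nonneg.mpr hj'R) (by linarith : (0:ℝ) ≤ t + t' - r)]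
    calc ∑' j : ℕ, wTerm t t' b j j'
        = ∑ i ∈ Finset.range (j' + 1), wTerm t t' b i j'
          + ∑' i : ℕ, wTerm t t' b (i + (j' + 1)) j' := hsplit.symm
      _ ≤ (2:ℝ) ^ (-(j':ℝ) * (t + t' - r)) * G (s - (t' - r/2))
          + (2:ℝ) ^ (-(j':ℝ) * (t + t' - r)) * G ((t' - r/2) + s) :=
        add_le_add hfin tail.2
      _ = (G ((t' - r/2) + s) + G (s - (t' - r/2))) * (2:ℝ) ^ (-(j':ℝ) * (t + t' - r)) := by ring
      _ ≤ (G ((t' - r/2) + s) + G (s - (t' - r/2))) * (2:ℝ) ^ (-(J:ℝ) * (t + t' - r)) :=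
        mul_le_mul_of_nonneg_left h2J (by linarith)

theorem tail_sum_bounds_aux (r t t' s : ℝ)
    (ht : r / 2 ≤ t) (ht' : r / 2 ≤ t') (hs : s > max t t' - r / 2) :
    ∃ C : ℝ, 0 < C ∧
      ∀ b : ℕ × ℕ → ℝ,
        (∀ j j' : ℕ, 0 ≤ b (j, j') ∧
          b (j, j') ≤ (2 : ℝ) ^ (((j : ℝ) + (j' : ℝ)) * r / 2 - |(j : ℝ) - (j' : ℝ)| * s)) →
        ∀ J : ℕ,
          (∀ j' : ℕ, j' ≤ J →
            Summable (fun j : {j : ℕ // J < j} => wTerm t t' b (j : ℕ) j') ∧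
            ∑' j : {j : ℕ // J < j}, wTerm t t' b (j : ℕ) j'
              ≤ C * (2 : ℝ) ^ (-(J : ℝ) * (t + t' - r))) ∧
          (∀ j' : ℕ, J < j' →
            Summable (fun j : ℕ => wTerm t t' b j j') ∧
            ∑' j : ℕ, wTerm t t' b j j'
              ≤ C * (2 : ℝ) ^ (-(J : ℝ) * (t + t' - r))) ∧
          (∀ j : ℕ, j ≤ J →
            Summable (fun j' : {j' : ℕ // J < j'} => wTerm t t' b j (j' : ℕ)) ∧
            ∑' j' : {j' : ℕ // J < j'}, wTerm t t' b j (j' : ℕ)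
              ≤ C * (2 : ℝ) ^ (-(J : ℝ) * (t + t' - r))) ∧
          (∀ j : ℕ, J < j →
            Summable (fun j' : ℕ => wTerm t t' b j j') ∧
            ∑' j' : ℕ, wTerm t t' b j j'
              ≤ C * (2 : ℝ) ^ (-(J : ℝ) * (t + t' - r))) := by
  have hα : 0 ≤ t' - r/2 := by linarith
  have hβ : 0 ≤ t - r/2 := by linarith
  have hsα : t' - r/2 < s :=
    lt_of_le_of_lt (by simpa using sub_le_sub_right (le_max_right t t') (r/2)) hs
  have hsβ : t - r/2 < s :=
    lt_of_le_of_lt (by simpa using sub_le_sub_right (le_max_left t t') (r/2)) hs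
  have hG1 := G_pos (show (0:ℝ) < (t' - r/2) + s by linarith)
  have hG2 := G_pos (show (0:ℝ) < s - (t' - r/2) by linarith)
  have hG3 := G_pos (show (0:ℝ) < (t - r/2) + s by linarith)
  have hG4 := G_pos (show (0:ℝ) < s - (t - r/2) by linarith)
  set Ca := G ((t' - r/2) + s) + G (s - (t' - r/2)) with hCa
  set Cb := G ((t - r/2) + s) + G (s - (t - r/2)) with hCb
  have hCapos : 0 < Ca := by rw [hCa]; linarith
  have hCbpos : 0 < Cb := by rw [hCb]; linarith
  refine ⟨Ca + Cb, by linarith, ?_⟩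
  intro b hb J
  have hKnn : ∀ x : ℝ, (0:ℝ) ≤ (2:ℝ)^x := fun x => Real.rpow_nonneg (by norm_num) _
  have hmono : ∀ u : ℝ, Ca * (2:ℝ)^u ≤ (Ca + Cb) * (2:ℝ)^u :=
    fun u => mul_le_mul_of_nonneg_right (by linarith) (hKnn u)
  have hmono' : ∀ u : ℝ, Cb * (2:ℝ)^u ≤ (Ca + Cb) * (2:ℝ)^u :=
    fun u => mul_le_mul_of_nonneg_right (by linarith) (hKnn u)
  have hrow := row_bounds r t t' s ht ht' hs b hb J
  have hb' : ∀ j j' : ℕ, 0 ≤ (fun p : ℕ × ℕ => b (p.2, p.1)) (j, j') ∧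
      (fun p : ℕ × ℕ => b (p.2, p.1)) (j, j')
        ≤ (2 : ℝ) ^ (((j : ℝ) + (j' : ℝ)) * r / 2 - |(j : ℝ) - (j' : ℝ)| * s) := by
    intro j j'
    refine ⟨(hb j' j).1, ?_⟩
    have h := (hb j' j).2
    rwa [abs_sub_comm ((j':ℝ)) ((j:ℝ)), add_comm ((j':ℝ)) ((j:ℝ))] at h
  have hs' : s > max t' t - r / 2 := by rwa [max_comm]
  have hcol := row_bounds r t' t s ht' ht hs' (fun p : ℕ × ℕ => b (p.2, p.1)) hb' J
  have hexp : t' + t - r = t + t' - r := by ring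
  refine ⟨?_, ?_, ?_, ?_⟩
  · intro j' hj'
    obtain ⟨h1, h2⟩ := hrow.1 j' hj'
    exact ⟨h1, h2.trans (hmono _)⟩
  · intro j' hj'
    obtain ⟨h1, h2⟩ := hrow.2 j' hj'
    exact ⟨h1, h2.trans (hmono _)⟩
  · intro j hj
    obtain ⟨h1, h2⟩ := hcol.1 j hj
    simp only [wTerm_swap, hexp] at h1 h2
    exact ⟨h1, h2.trans (hmono' _)⟩
  · intro j hj
    obtain ⟨h1, h2⟩ := hcol.2 j hj
    simp only [wTerm_swap, hexp] at h1 h2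
    exact ⟨h1, h2.trans (hmono' _)⟩

/-- Tail bounds for the weighted row and column sums of a block-norm matrix with
two-scale decay `0 ≤ b(j,j') ≤ 2^{(j+j')r/2 − |j−j'|s}`: outside the square
`[0,J]²` each weighted row/column sum is (summable and) bounded by
`C · 2^{−J(t+t'−r)}`, with `C` depending only on `(r,t,t',s)`. -/
theorem tail_sum_bounds (r t t' s : ℝ)
    (ht : r / 2 ≤ t) (ht' : r / 2 ≤ t') (hs : s > max t t' - r / 2) :
    ∃ C : ℝ, 0 < C ∧
      ∀ b : ℕ × ℕ → ℝ,
        (∀ j j' : ℕ, 0 ≤ b (j, j') ∧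
          b (j, j') ≤ (2 : ℝ) ^ (((j : ℝ) + (j' : ℝ)) * r / 2 - |(j : ℝ) - (j' : ℝ)| * s)) →
        ∀ J : ℕ,
          (∀ j' : ℕ, j' ≤ J →
            Summable (fun j : {j : ℕ // J < j} => wTerm t t' b (j : ℕ) j') ∧
            ∑' j : {j : ℕ // J < j}, wTerm t t' b (j : ℕ) j'
              ≤ C * (2 : ℝ) ^ (-(J : ℝ) * (t + t' - r))) ∧
          (∀ j' : ℕ, J < j' →
            Summable (fun j : ℕ => wTerm t t' b j j') ∧
            ∑' j : ℕ, wTerm t t' b j j'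
              ≤ C * (2 : ℝ) ^ (-(J : ℝ) * (t + t' - r))) ∧
          (∀ j : ℕ, j ≤ J →
            Summable (fun j' : {j' : ℕ // J < j'} => wTerm t t' b j (j' : ℕ)) ∧
            ∑' j' : {j' : ℕ // J < j'}, wTerm t t' b j (j' : ℕ)
              ≤ C * (2 : ℝ) ^ (-(J : ℝ) * (t + t' - r))) ∧
          (∀ j : ℕ, J < j →
            Summable (fun j' : ℕ => wTerm t t' b j j') ∧
            ∑' j' : ℕ, wTerm t t' b j j'
              ≤ C * (2 : ℝ) ^ (-(J : ℝ) * (t + t' - r))) :=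
  tail_sum_bounds_aux r t t' s ht ht' hs
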